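/- For every v ∈ ℂ and every τ in the upper half-plane H, the v-derivative of the Jacobi theta function θ₂ satisfies θ₂'(v, τ+1) = θ₃'(v, τ) and θ₂'(v, -1/τ) = (τ/i)^{1/2}·e^{π i τ v²}·(2π i τ v · θ₁(τ v, τ) + τ · θ₁'(τ v, τ)), where (τ/i)^{1/2} denotes the principal branch of the square root. -/

import Mathlib

open Complex Real

/-- `q = e^{2πiτ}`. -/
noncomputable def jq (τ : ℂ) : ℂ := Complex.exp (2 * (π : ℂ) * Complex.I * τ)

/-- `θ(v,τ) = 2 q^{1/8} sin(πv) ∏_{j=1}^∞ (1-q^j)(1-e^{2πiv}q^j)(1-e^{-2πiv}q^j)`. -/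
noncomputable def jTheta (v τ : ℂ) : ℂ :=
  2 * Complex.exp ((π : ℂ) * Complex.I * τ / 4) * Complex.sin ((π : ℂ) * v) *
    ∏' j : ℕ, ((1 - jq τ ^ (j + 1)) *
      (1 - Complex.exp (2 * (π : ℂ) * Complex.I * v) * jq τ ^ (j + 1)) *
      (1 - Complex.exp (-(2 * (π : ℂ) * Complex.I * v)) * jq τ ^ (j + 1)))

/-- `θ₁(v,τ) = 2 q^{1/8} cos(πv) ∏_{j=1}^∞ (1-q^j)(1+e^{2πiv}q^j)(1+e^{-2πiv}q^j)`. -/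
noncomputable def jTheta₁ (v τ : ℂ) : ℂ :=
  2 * Complex.exp ((π : ℂ) * Complex.I * τ / 4) * Complex.cos ((π : ℂ) * v) *
    ∏' j : ℕ, ((1 - jq τ ^ (j + 1)) *
      (1 + Complex.exp (2 * (π : ℂ) * Complex.I * v) * jq τ ^ (j + 1)) *
      (1 + Complex.exp (-(2 * (π : ℂ) * Complex.I * v)) * jq τ ^ (j + 1)))

/-- `θ₂(v,τ) = ∏_{j=1}^∞ (1-q^j)(1-e^{2πiv}q^{j-1/2})(1-e^{-2πiv}q^{j-1/2})`. -/
noncomputable def jTheta₂ (v τ : ℂ) : ℂ :=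
  ∏' j : ℕ, ((1 - jq τ ^ (j + 1)) *
    (1 - Complex.exp (2 * (π : ℂ) * Complex.I * v) *
      Complex.exp (2 * (π : ℂ) * Complex.I * τ * ((j : ℂ) + 1 / 2))) *
    (1 - Complex.exp (-(2 * (π : ℂ) * Complex.I * v)) *
      Complex.exp (2 * (π : ℂ) * Complex.I * τ * ((j : ℂ) + 1 / 2))))

/-- `θ₃(v,τ) = ∏_{j=1}^∞ (1-q^j)(1+e^{2πiv}q^{j-1/2})(1+e^{-2πiv}q^{j-1/2})`. -/
noncomputable def jTheta₃ (v τ : ℂ) : ℂ :=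
  ∏' j : ℕ, ((1 - jq τ ^ (j + 1)) *
    (1 + Complex.exp (2 * (π : ℂ) * Complex.I * v) *
      Complex.exp (2 * (π : ℂ) * Complex.I * τ * ((j : ℂ) + 1 / 2))) *
    (1 + Complex.exp (-(2 * (π : ℂ) * Complex.I * v)) *
      Complex.exp (2 * (π : ℂ) * Complex.I * τ * ((j : ℂ) + 1 / 2))))

/-- `θ'(v,τ)`, the partial derivative of `θ` with respect to `v`. -/
noncomputable def jTheta' (v τ : ℂ) : ℂ := deriv (fun w : ℂ => jTheta w τ) v

/-- `θ₁'(v,τ)`, the partial derivative of `θ₁` with respect to `v`. -/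
noncomputable def jTheta₁' (v τ : ℂ) : ℂ := deriv (fun w : ℂ => jTheta₁ w τ) v

/-- `θ₂'(v,τ)`, the partial derivative of `θ₂` with respect to `v`. -/
noncomputable def jTheta₂' (v τ : ℂ) : ℂ := deriv (fun w : ℂ => jTheta₂ w τ) v

/-- `θ₃'(v,τ)`, the partial derivative of `θ₃` with respect to `v`. -/
noncomputable def jTheta₃' (v τ : ℂ) : ℂ := deriv (fun w : ℂ => jTheta₃ w τ) v

/-!
Both identities come down to the Jacobi triple product
`∑ₙ xⁿ Q^(n²) = ∏ⱼ (1 - Q^(2j+2)) (1 + x Q^(2j+1)) (1 + x⁻¹ Q^(2j+1))`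
(`Q = e^(πiτ)`, `x = e^(2πiv)`), which identifies `θ₃(v, τ)`, `θ₂(v, τ)` and
`e^(-πiτ/4 - πiv) θ₁(v, τ)` with Mathlib's series `jacobiTheta₂` at `v`, `v + 1/2` and `v + τ/2`.
The transformation under `τ ↦ -1/τ` is then the functional equation of `jacobiTheta₂'`, while the
one under `τ ↦ τ + 1` holds already for the products, as it only changes the sign of `q^(j-1/2)`.

The triple product is the limit `N → ∞` of its finite form
`∏_{j<N} (1 + x Q^(2j+1)) (1 + x⁻¹ Q^(2j+1)) = ∑_{|n| ≤ N} [2N, N+n]_{Q²} Q^(n²) xⁿ`,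
proved by induction on `N` through a three-term q-Pascal recurrence. Tannery's theorem passes
to the limit: the Gaussian binomials are uniformly bounded and tend to `1 / (Q²; Q²)_∞`.
-/

open Filter Finset Topology

lemma norm_pow_lt_one {t : ℂ} (ht : ‖t‖ < 1) {k : ℕ} (hk : k ≠ 0) : ‖t ^ k‖ < 1 := by
  rw [norm_pow]
  exact pow_lt_one₀ (norm_nonneg t) ht hk

section QPochhammer

variable {t : ℂ}

noncomputable def qPochhammer (t : ℂ) (m : ℕ) : ℂ := ∏ i ∈ range m, (1 - t ^ (i + 1))

/-- `1 / (t; t)_a`, extended by `0` to `a < 0` (as is the continuation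
`(t^(a+1); t)_∞ / (t; t)_∞`), so that `qPochhammerInv_eq_mul_succ` holds for every `a`. -/
noncomputable def qPochhammerInv (t : ℂ) (a : ℤ) : ℂ :=
  if 0 ≤ a then (qPochhammer t a.toNat)⁻¹ else 0

/-- The Gaussian binomial coefficient `[2N, N + n]_t`. -/
noncomputable def qBinomCentral (t : ℂ) (N : ℕ) (n : ℤ) : ℂ :=
  qPochhammer t (2 * N) * qPochhammerInv t (N + n) * qPochhammerInv t (N - n)

lemma qPochhammer_succ (t : ℂ) (m : ℕ) :
    qPochhammer t (m + 1) = qPochhammer t m * (1 - t ^ (m + 1)) :=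
  prod_range_succ _ _

lemma one_sub_pow_succ_ne_zero (ht : ‖t‖ < 1) (k : ℕ) : 1 - t ^ (k + 1) ≠ 0 :=
  sub_ne_zero.2 fun h => (norm_pow_lt_one ht k.succ_ne_zero).ne' (by rw [← h, norm_one])

lemma qPochhammerInv_natCast (t : ℂ) (m : ℕ) : qPochhammerInv t m = (qPochhammer t m)⁻¹ := by
  simp [qPochhammerInv]

lemma qPochhammerInv_of_neg {a : ℤ} (ha : a < 0) : qPochhammerInv t a = 0 :=
  if_neg (not_le.2 ha)

lemma qPochhammerInv_eq_mul_succ (ht : ‖t‖ < 1) (a : ℤ) :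
    qPochhammerInv t a = (1 - t ^ (a + 1)) * qPochhammerInv t (a + 1) := by
  rcases lt_trichotomy a (-1) with ha | rfl | ha
  · rw [qPochhammerInv_of_neg (by omega), qPochhammerInv_of_neg (by omega), mul_zero]
  · rw [qPochhammerInv_of_neg (by omega)]
    simp
  · lift a to ℕ using (by omega)
    rw [show (a : ℤ) + 1 = ((a + 1 : ℕ) : ℤ) by push_cast; rfl, zpow_natCast,
      qPochhammerInv_natCast, qPochhammerInv_natCast, qPochhammer_succ, mul_inv, ← mul_assoc,
      mul_comm _ (qPochhammer t a)⁻¹, mul_assoc, mul_inv_cancel₀ (one_sub_pow_succ_ne_zero ht a),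
      mul_one]

lemma qBinomCentral_eq_zero {N : ℕ} {n : ℤ} (h : N < |n|) : qBinomCentral t N n = 0 := by
  rcases lt_abs.1 h with h | h
  · rw [qBinomCentral, qPochhammerInv_of_neg (a := N - n) (by omega), mul_zero]
  · rw [qBinomCentral, qPochhammerInv_of_neg (a := N + n) (by omega), mul_zero, zero_mul]

lemma qBinomCentral_zero_zero (t : ℂ) : qBinomCentral t 0 0 = 1 := by
  simp [qBinomCentral, qPochhammerInv, qPochhammer]

lemma qBinomCentral_succ (ht : ‖t‖ < 1) (ht0 : t ≠ 0) (N : ℕ) (n : ℤ) :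
    qBinomCentral t (N + 1) n = (1 + t ^ (2 * N + 1)) * qBinomCentral t N n
      + t ^ ((N : ℤ) + 1 - n) * qBinomCentral t N (n - 1)
      + t ^ ((N : ℤ) + 1 + n) * qBinomCentral t N (n + 1) := by
  set a : ℤ := N + n with ha
  set b : ℤ := N - n with hb
  have hpow (k : ℕ) : t ^ (2 * N + k) = t ^ a * t ^ b * t ^ k := by
    rw [← zpow_add₀ ht0, ← zpow_natCast, ← zpow_natCast, ← zpow_add₀ ht0]
    congr 1; push_cast; ring
  have hP : qPochhammer t (2 * (N + 1))
      = qPochhammer t (2 * N) * (1 - t ^ a * t ^ b * t) * (1 - t ^ a * t ^ b * t ^ 2) := by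
    rw [show 2 * (N + 1) = 2 * N + 1 + 1 by ring, qPochhammer_succ, qPochhammer_succ, add_assoc,
      hpow, hpow, pow_one]
  -- Expressed through `1 / (t; t)_(a+1)` and `1 / (t; t)_(b+1)` only, every coefficient becomes a
  -- Laurent polynomial in `t`, `t ^ a`, `t ^ b`.
  simp only [qBinomCentral]
  rw [hP, show ((N + 1 : ℕ) : ℤ) + n = a + 1 by push_cast; ring,
    show ((N + 1 : ℕ) : ℤ) - n = b + 1 by push_cast; ring,
    show (N : ℤ) + (n - 1) = a - 1 by ring, show (N : ℤ) - (n - 1) = b + 1 by ring,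
    show (N : ℤ) + (n + 1) = a + 1 by ring, show (N : ℤ) - (n + 1) = b - 1 by ring,
    show (N : ℤ) + 1 - n = b + 1 by ring, show (N : ℤ) + 1 + n = a + 1 by ring,
    qPochhammerInv_eq_mul_succ ht (a - 1), qPochhammerInv_eq_mul_succ ht (b - 1), sub_add_cancel,
    sub_add_cancel, qPochhammerInv_eq_mul_succ ht a, qPochhammerInv_eq_mul_succ ht b,
    zpow_add_one₀ ht0, zpow_add_one₀ ht0, hpow, pow_one]
  ring

lemma multipliable_one_add_mul_pow (c : ℂ) (ht : ‖t‖ < 1) :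
    Multipliable fun j : ℕ => 1 + c * t ^ j :=
  multipliable_one_add_of_summable <| by
    simpa [norm_mul, norm_pow] using
      (summable_geometric_of_lt_one (norm_nonneg t) ht).mul_left ‖c‖

lemma multipliable_one_sub_pow_succ (ht : ‖t‖ < 1) :
    Multipliable fun j : ℕ => 1 - t ^ (j + 1) :=
  (multipliable_one_add_mul_pow (-t) ht).congr fun j => by ring

lemma tprod_one_sub_pow_succ_ne_zero (ht : ‖t‖ < 1) : ∏' j : ℕ, (1 - t ^ (j + 1)) ≠ 0 := by
  simpa only [sub_eq_add_neg] using tprod_one_add_ne_zero_of_summable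
    (f := fun j : ℕ => -t ^ (j + 1))
    (fun j => by simpa [sub_eq_add_neg] using one_sub_pow_succ_ne_zero ht j)
    (by simpa [norm_pow, pow_succ] using
      (summable_geometric_of_lt_one (norm_nonneg t) ht).mul_right ‖t‖)

lemma tendsto_qPochhammer (ht : ‖t‖ < 1) :
    Tendsto (qPochhammer t) atTop (𝓝 (∏' j : ℕ, (1 - t ^ (j + 1)))) :=
  (multipliable_one_sub_pow_succ ht).hasProd.tendsto_prod_nat

lemma tendsto_qPochhammerInv_add (ht : ‖t‖ < 1) (c : ℤ) :
    Tendsto (fun N : ℕ => qPochhammerInv t (N + c)) atTop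
      (𝓝 (∏' j : ℕ, (1 - t ^ (j + 1)))⁻¹) := by
  have hc : Tendsto (fun N : ℕ => ((N : ℤ) + c).toNat) atTop atTop :=
    tendsto_atTop_atTop.2 fun b => ⟨b + c.natAbs, fun N hN => by omega⟩
  refine (((tendsto_qPochhammer ht).comp hc).inv₀ (tprod_one_sub_pow_succ_ne_zero ht)).congr' ?_
  filter_upwards [eventually_ge_atTop c.natAbs] with N hN
  simp [qPochhammerInv, show 0 ≤ (N : ℤ) + c by omega]

lemma tendsto_qBinomCentral (ht : ‖t‖ < 1) (n : ℤ) :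
    Tendsto (qBinomCentral t · n) atTop (𝓝 (∏' j : ℕ, (1 - t ^ (j + 1)))⁻¹) := by
  have h2N := (tendsto_qPochhammer ht).comp (tendsto_id.const_mul_atTop' two_pos)
  have hlim := (h2N.mul (tendsto_qPochhammerInv_add ht n)).mul
    (tendsto_qPochhammerInv_add ht (-n))
  rw [mul_inv_cancel₀ (tprod_one_sub_pow_succ_ne_zero ht), one_mul] at hlim
  simpa [qBinomCentral, sub_eq_add_neg] using hlim

lemma exists_norm_qBinomCentral_le (ht : ‖t‖ < 1) : ∃ K, ∀ N n, ‖qBinomCentral t N n‖ ≤ K := by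
  obtain ⟨A, hA⟩ := isBounded_iff_forall_norm_le.1
    (Metric.isBounded_range_of_tendsto _ (tendsto_qPochhammer ht))
  obtain ⟨B, hB⟩ := isBounded_iff_forall_norm_le.1 (Metric.isBounded_range_of_tendsto _
    ((tendsto_qPochhammer ht).inv₀ (tprod_one_sub_pow_succ_ne_zero ht)))
  have hA₀ : 0 ≤ A := (norm_nonneg _).trans (hA _ ⟨0, rfl⟩)
  have hB₀ : 0 ≤ B := (norm_nonneg _).trans (hB _ ⟨0, rfl⟩)
  have hInv (a : ℤ) : ‖qPochhammerInv t a‖ ≤ B := by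
    unfold qPochhammerInv
    split_ifs
    · exact hB _ ⟨_, rfl⟩
    · simpa using hB₀
  refine ⟨A * B * B, fun N n => ?_⟩
  rw [qBinomCentral, norm_mul, norm_mul]
  exact mul_le_mul (mul_le_mul (hA _ ⟨_, rfl⟩) (hInv _) (norm_nonneg _) hA₀) (hInv _)
    (norm_nonneg _) (mul_nonneg hA₀ hB₀)

end QPochhammer

section TripleProduct

variable {Q x : ℂ}

lemma summable_qBinomCentral_mul (t : ℂ) (N : ℕ) (f : ℤ → ℂ) :
    Summable fun n => qBinomCentral t N n * f n :=
  summable_of_ne_finset_zero (s := Icc (-N : ℤ) N) fun n hn => by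
    rw [qBinomCentral_eq_zero, zero_mul]
    simp only [mem_Icc, not_and_or, not_le] at hn
    rw [lt_abs]
    omega

lemma zpow_sq_mul_zpow (hQ0 : Q ≠ 0) (k m : ℤ) : (Q ^ 2) ^ k * Q ^ m = Q ^ (2 * k + m) := by
  rw [← zpow_natCast, ← zpow_mul, ← zpow_add₀ hQ0]
  norm_num

lemma qBinomCentral_succ_mul (hQ : ‖Q‖ < 1) (hQ0 : Q ≠ 0) (hx : x ≠ 0) (N : ℕ) (n : ℤ) :
    qBinomCentral (Q ^ 2) (N + 1) n * (x ^ n * Q ^ (n ^ 2))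
      = (1 + (Q ^ 2) ^ (2 * N + 1)) * (qBinomCentral (Q ^ 2) N n * (x ^ n * Q ^ (n ^ 2)))
        + Q ^ (2 * N + 1) * x
          * (qBinomCentral (Q ^ 2) N (n - 1) * (x ^ (n - 1) * Q ^ ((n - 1) ^ 2)))
        + Q ^ (2 * N + 1) * x⁻¹
          * (qBinomCentral (Q ^ 2) N (n + 1) * (x ^ (n + 1) * Q ^ ((n + 1) ^ 2))) := by
  have hQodd (m : ℤ) : Q ^ (2 * N + 1) * Q ^ m = Q ^ ((2 * N + 1 : ℕ) + m) := by
    rw [zpow_add₀ hQ0, zpow_natCast]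
  have hleft : (Q ^ 2) ^ ((N : ℤ) + 1 - n) * Q ^ (n ^ 2)
      = Q ^ (2 * N + 1) * Q ^ ((n - 1) ^ 2) := by
    rw [zpow_sq_mul_zpow hQ0, hQodd]; congr 1; push_cast; ring
  have hright : (Q ^ 2) ^ ((N : ℤ) + 1 + n) * Q ^ (n ^ 2)
      = Q ^ (2 * N + 1) * Q ^ ((n + 1) ^ 2) := by
    rw [zpow_sq_mul_zpow hQ0, hQodd]; congr 1; push_cast; ring
  rw [qBinomCentral_succ (norm_pow_lt_one hQ two_ne_zero) (pow_ne_zero 2 hQ0),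
    zpow_sub_one₀ hx, zpow_add_one₀ hx]
  linear_combination (qBinomCentral (Q ^ 2) N (n - 1) * x ^ n) * hleft
    + (qBinomCentral (Q ^ 2) N (n + 1) * x ^ n) * hright
    - (Q ^ (2 * N + 1) * x ^ n * (qBinomCentral (Q ^ 2) N (n - 1) * Q ^ ((n - 1) ^ 2)
      + qBinomCentral (Q ^ 2) N (n + 1) * Q ^ ((n + 1) ^ 2))) * mul_inv_cancel₀ hx

theorem tsum_qBinomCentral_mul_eq_prod (hQ : ‖Q‖ < 1) (hQ0 : Q ≠ 0) (hx : x ≠ 0) (N : ℕ) :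
    ∑' n : ℤ, qBinomCentral (Q ^ 2) N n * (x ^ n * Q ^ (n ^ 2)) =
      ∏ j ∈ range N, (1 + x * Q ^ (2 * j + 1)) * (1 + x⁻¹ * Q ^ (2 * j + 1)) := by
  induction N with
  | zero =>
    rw [tsum_eq_single 0 fun n hn => by
      rw [qBinomCentral_eq_zero (by simpa [pos_iff_ne_zero] using hn), zero_mul]]
    simp [qBinomCentral_zero_zero]
  | succ N ih =>
    set T : ℤ → ℂ := fun n => qBinomCentral (Q ^ 2) N n * (x ^ n * Q ^ (n ^ 2))
    have hT : Summable T := summable_qBinomCentral_mul _ _ _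
    have hTpred : Summable fun n => T (n - 1) := hT.comp_injective (sub_left_injective (b := 1))
    have hTsucc : Summable fun n => T (n + 1) := hT.comp_injective (add_left_injective 1)
    have hshift₁ : ∑' n, T (n - 1) = ∑' n, T n := (Equiv.subRight 1).tsum_eq T
    have hshift₂ : ∑' n, T (n + 1) = ∑' n, T n := (Equiv.addRight 1).tsum_eq T
    rw [tsum_congr (qBinomCentral_succ_mul hQ hQ0 hx N),
      ((hT.mul_left _).add (hTpred.mul_left _)).tsum_add (hTsucc.mul_left _),
      (hT.mul_left _).tsum_add (hTpred.mul_left _), tsum_mul_left, tsum_mul_left, tsum_mul_left,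
      hshift₁, hshift₂, ih, prod_range_succ]
    linear_combination -(∏ j ∈ range N, (1 + x * Q ^ (2 * j + 1)) * (1 + x⁻¹ * Q ^ (2 * j + 1)))
      * Q ^ (2 * N + 1) * Q ^ (2 * N + 1) * mul_inv_cancel₀ hx

lemma jacobiTheta₂_term_eq (n : ℤ) (z τ : ℂ) :
    jacobiTheta₂_term n z τ = cexp (2 * π * I * z) ^ n * cexp (π * I * τ) ^ (n ^ 2) := by
  rw [jacobiTheta₂_term, ← exp_int_mul, ← exp_int_mul, ← Complex.exp_add]
  push_cast
  ring_nf

lemma summable_zpow_mul_zpow_sq (hQ : ‖Q‖ < 1) (hQ0 : Q ≠ 0) (hx : x ≠ 0) :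
    Summable fun n : ℤ => x ^ n * Q ^ (n ^ 2) := by
  have hτ : 0 < (log Q / (π * I)).im := by
    have : (log Q).re < 0 := by
      rw [log_re]
      exact Real.log_neg (norm_pos_iff.2 hQ0) hQ
    simpa [Complex.div_im] using div_neg_of_neg_of_pos (mul_neg_of_neg_of_pos this pi_pos)
      (mul_pos pi_pos pi_pos)
  refine ((summable_jacobiTheta₂_term_iff (log x / (2 * π * I)) _).2 hτ).congr fun n => ?_
  rw [jacobiTheta₂_term_eq]
  congr 2
  · rw [mul_div_cancel₀ _ (by simp [pi_ne_zero]), exp_log hx]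
  · rw [mul_div_cancel₀ _ (by simp [pi_ne_zero]), exp_log hQ0]

lemma multipliable_one_add_mul_pow_odd (c : ℂ) (hQ : ‖Q‖ < 1) :
    Multipliable fun j : ℕ => 1 + c * Q ^ (2 * j + 1) :=
  (multipliable_one_add_mul_pow (c * Q) (norm_pow_lt_one hQ two_ne_zero)).congr fun j => by ring

/-- The Jacobi triple product. -/
theorem tsum_zpow_mul_zpow_sq_eq_tprod (hQ : ‖Q‖ < 1) (hQ0 : Q ≠ 0) (hx : x ≠ 0) :
    ∑' n : ℤ, x ^ n * Q ^ (n ^ 2) =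
      (∏' j : ℕ, (1 - (Q ^ 2) ^ (j + 1))) * (∏' j : ℕ, (1 + x * Q ^ (2 * j + 1))) *
        ∏' j : ℕ, (1 + x⁻¹ * Q ^ (2 * j + 1)) := by
  have ht : ‖Q ^ 2‖ < 1 := norm_pow_lt_one hQ two_ne_zero
  set P := ∏' j : ℕ, (1 - (Q ^ 2) ^ (j + 1))
  obtain ⟨K, hK⟩ := exists_norm_qBinomCentral_le ht
  have hseries : Tendsto (fun N => ∑' n : ℤ, qBinomCentral (Q ^ 2) N n * (x ^ n * Q ^ (n ^ 2)))
      atTop (𝓝 (∑' n : ℤ, P⁻¹ * (x ^ n * Q ^ (n ^ 2)))) :=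
    tendsto_tsum_of_dominated_convergence
      ((summable_zpow_mul_zpow_sq hQ hQ0 hx).norm.mul_left K)
      (fun n => (tendsto_qBinomCentral ht n).mul_const _)
      (Eventually.of_forall fun N n => by
        rw [norm_mul]; exact mul_le_mul_of_nonneg_right (hK N n) (norm_nonneg _))
  have hprod : Tendsto (fun N => ∑' n : ℤ, qBinomCentral (Q ^ 2) N n * (x ^ n * Q ^ (n ^ 2)))
      atTop (𝓝 ((∏' j : ℕ, (1 + x * Q ^ (2 * j + 1))) *
        ∏' j : ℕ, (1 + x⁻¹ * Q ^ (2 * j + 1)))) := by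
    simp_rw [tsum_qBinomCentral_mul_eq_prod hQ hQ0 hx, prod_mul_distrib]
    exact (multipliable_one_add_mul_pow_odd x hQ).hasProd.tendsto_prod_nat.mul
      (multipliable_one_add_mul_pow_odd x⁻¹ hQ).hasProd.tendsto_prod_nat
  rw [tsum_mul_left] at hseries
  rw [mul_assoc, ← tendsto_nhds_unique hseries hprod, ← mul_assoc,
    mul_inv_cancel₀ (tprod_one_sub_pow_succ_ne_zero ht), one_mul]

end TripleProduct

section Theta

variable {τ : ℂ}

lemma exp_two_pi_I_mul_add_half (w : ℂ) :
    cexp (2 * π * I * (w + 1 / 2)) = -cexp (2 * π * I * w) := by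
  rw [show 2 * π * I * (w + 1 / 2) = 2 * π * I * w + π * I by ring, Complex.exp_add,
    exp_pi_mul_I, mul_neg_one]

lemma jq_add_one (τ : ℂ) : jq (τ + 1) = jq τ := by
  rw [jq, jq, mul_add, mul_one, Complex.exp_add, exp_two_pi_mul_I, mul_one]

lemma jTheta₂_add_one (v τ : ℂ) : jTheta₂ v (τ + 1) = jTheta₃ v τ := by
  refine tprod_congr fun j => ?_
  rw [jq_add_one, show 2 * π * I * (τ + 1) * ((j : ℂ) + 1 / 2)
      = 2 * π * I * τ * ((j : ℂ) + 1 / 2) + 2 * π * I * ((j : ℂ) + 1 / 2) by ring,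
    Complex.exp_add, exp_two_pi_I_mul_add_half, mul_comm _ (j : ℂ), exp_nat_mul_two_pi_mul_I]
  ring

lemma jTheta₃_add_half (v τ : ℂ) : jTheta₃ (v + 1 / 2) τ = jTheta₂ v τ := by
  refine tprod_congr fun j => ?_
  rw [Complex.exp_neg, Complex.exp_neg, exp_two_pi_I_mul_add_half, inv_neg]
  ring

lemma norm_exp_pi_I_mul_lt_one (hτ : 0 < τ.im) : ‖cexp (π * I * τ)‖ < 1 := by
  rw [Complex.norm_exp, Real.exp_lt_one_iff]
  simpa using mul_pos pi_pos hτ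

lemma jq_eq_sq (τ : ℂ) : jq τ = cexp (π * I * τ) ^ 2 := by
  rw [jq, ← Complex.exp_nat_mul]
  ring_nf

lemma exp_two_pi_I_mul_half_odd (τ : ℂ) (j : ℕ) :
    cexp (2 * π * I * τ * ((j : ℂ) + 1 / 2)) = cexp (π * I * τ) ^ (2 * j + 1) := by
  rw [← Complex.exp_nat_mul]
  push_cast
  ring_nf

lemma jacobiTheta₂_eq_tprod (z : ℂ) (hτ : 0 < τ.im) :
    jacobiTheta₂ z τ =
      (∏' j : ℕ, (1 - (cexp (π * I * τ) ^ 2) ^ (j + 1))) *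
        (∏' j : ℕ, (1 + cexp (2 * π * I * z) * cexp (π * I * τ) ^ (2 * j + 1))) *
          ∏' j : ℕ, (1 + (cexp (2 * π * I * z))⁻¹ * cexp (π * I * τ) ^ (2 * j + 1)) := by
  rw [jacobiTheta₂, tsum_congr fun n => jacobiTheta₂_term_eq n z τ]
  exact tsum_zpow_mul_zpow_sq_eq_tprod (norm_exp_pi_I_mul_lt_one hτ) (Complex.exp_ne_zero _)
    (Complex.exp_ne_zero _)

lemma jTheta₃_eq_jacobiTheta₂ (hτ : 0 < τ.im) (v : ℂ) : jTheta₃ v τ = jacobiTheta₂ v τ := by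
  have hQ := norm_exp_pi_I_mul_lt_one hτ
  have hQ2 : ‖cexp (π * I * τ) ^ 2‖ < 1 := norm_pow_lt_one hQ two_ne_zero
  rw [jacobiTheta₂_eq_tprod v hτ, ← Multipliable.tprod_mul (multipliable_one_sub_pow_succ hQ2)
    (multipliable_one_add_mul_pow_odd _ hQ), ← Multipliable.tprod_mul
    ((multipliable_one_sub_pow_succ hQ2).mul (multipliable_one_add_mul_pow_odd _ hQ))
    (multipliable_one_add_mul_pow_odd _ hQ)]
  refine tprod_congr fun j => ?_
  rw [jq_eq_sq, exp_two_pi_I_mul_half_odd, Complex.exp_neg]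

lemma jTheta₂_eq_jacobiTheta₂ (hτ : 0 < τ.im) (v : ℂ) :
    jTheta₂ v τ = jacobiTheta₂ (v + 1 / 2) τ := by
  rw [← jTheta₃_add_half, jTheta₃_eq_jacobiTheta₂ hτ]

lemma two_mul_cos_eq_exp_mul (v : ℂ) :
    2 * Complex.cos (π * v) = cexp (π * I * v) * (1 + (cexp (2 * π * I * v))⁻¹) := by
  rw [Complex.two_cos, mul_add, mul_one, ← Complex.exp_neg, ← Complex.exp_add]
  ring_nf

lemma jTheta₁_eq_jacobiTheta₂ (hτ : 0 < τ.im) (v : ℂ) :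
    jTheta₁ v τ = cexp (π * I * τ / 4 + π * I * v) * jacobiTheta₂ (v + τ / 2) τ := by
  set Q := cexp (π * I * τ)
  set x := cexp (2 * π * I * v)
  have hQ : ‖Q‖ < 1 := norm_exp_pi_I_mul_lt_one hτ
  have hQ0 : Q ≠ 0 := Complex.exp_ne_zero _
  have hQ2 : ‖Q ^ 2‖ < 1 := norm_pow_lt_one hQ two_ne_zero
  have hshift : cexp (2 * π * I * (v + τ / 2)) = x * Q := by
    rw [← Complex.exp_add]; ring_nf
  have hM (c : ℂ) : Multipliable fun j : ℕ => 1 + c * (Q ^ 2) ^ (j + 1) :=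
    (multipliable_one_add_mul_pow (c * Q ^ 2) hQ2).congr fun j => by ring
  have hB : ∏' j : ℕ, (1 + x * Q * Q ^ (2 * j + 1)) = ∏' j : ℕ, (1 + x * (Q ^ 2) ^ (j + 1)) :=
    tprod_congr fun j => by ring
  have hC : ∏' j : ℕ, (1 + (x * Q)⁻¹ * Q ^ (2 * j + 1))
      = (1 + x⁻¹) * ∏' j : ℕ, (1 + x⁻¹ * (Q ^ 2) ^ (j + 1)) := by
    have hodd (j : ℕ) : x⁻¹ * (Q ^ 2) ^ (j + 1) = (x * Q)⁻¹ * Q ^ (2 * (j + 1) + 1) := by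
      field_simp; ring
    rw [tprod_eq_zero_mul' (f := fun j : ℕ => 1 + (x * Q)⁻¹ * Q ^ (2 * j + 1))
      ((hM x⁻¹).congr fun j => by rw [hodd]), tprod_congr fun j => congrArg (1 + ·) (hodd j)]
    field_simp
    ring
  have hθ₁ : jTheta₁ v τ = 2 * cexp (π * I * τ / 4) * Complex.cos (π * v) *
      ∏' j : ℕ, ((1 - (Q ^ 2) ^ (j + 1)) * (1 + x * (Q ^ 2) ^ (j + 1)) *
        (1 + x⁻¹ * (Q ^ 2) ^ (j + 1))) := by
    rw [jTheta₁]
    congr 1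
    exact tprod_congr fun j => by rw [jq_eq_sq, Complex.exp_neg]
  rw [jacobiTheta₂_eq_tprod _ hτ, hshift, hB, hC, hθ₁, Multipliable.tprod_mul
    ((multipliable_one_sub_pow_succ hQ2).mul (hM x)) (hM x⁻¹), Multipliable.tprod_mul
    (multipliable_one_sub_pow_succ hQ2) (hM x), Complex.exp_add,
    mul_assoc 2, mul_comm _ (Complex.cos _), ← mul_assoc 2, two_mul_cos_eq_exp_mul]
  ring

lemma hasDerivAt_jacobiTheta₂_add_const (c : ℂ) (hτ : 0 < τ.im) (v : ℂ) :
    HasDerivAt (fun w => jacobiTheta₂ (w + c) τ) (jacobiTheta₂' (v + c) τ) v :=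
  (hasDerivAt_jacobiTheta₂_fst (v + c) hτ).comp_add_const v c

lemma jTheta₂'_eq_jacobiTheta₂' (hτ : 0 < τ.im) (v : ℂ) :
    jTheta₂' v τ = jacobiTheta₂' (v + 1 / 2) τ := by
  rw [jTheta₂', funext fun w => jTheta₂_eq_jacobiTheta₂ hτ w]
  exact (hasDerivAt_jacobiTheta₂_add_const _ hτ v).deriv

lemma jTheta₁'_eq_jacobiTheta₂' (hτ : 0 < τ.im) (v : ℂ) :
    jTheta₁' v τ = cexp (π * I * τ / 4 + π * I * v) *
      (π * I * jacobiTheta₂ (v + τ / 2) τ + jacobiTheta₂' (v + τ / 2) τ) := by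
  have hexp : HasDerivAt (fun w => cexp (π * I * τ / 4 + π * I * w))
      (cexp (π * I * τ / 4 + π * I * v) * (π * I)) v :=
    (by simpa using ((hasDerivAt_id v).const_mul (π * I)).const_add (π * I * τ / 4) :
      HasDerivAt (fun w => π * I * τ / 4 + π * I * w) (π * I) v).cexp
  rw [jTheta₁', funext fun w => jTheta₁_eq_jacobiTheta₂ hτ w,
    (hexp.fun_mul (hasDerivAt_jacobiTheta₂_add_const _ hτ v)).deriv]
  ring

lemma im_neg_one_div_pos (hτ : 0 < τ.im) : 0 < (-1 / τ).im := by
  have hτ0 : τ ≠ 0 := fun h => by simp [h] at hτ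
  rw [div_eq_mul_inv, neg_one_mul, neg_im, inv_im, neg_div, neg_neg]
  exact div_pos hτ (normSq_pos.2 hτ0)

lemma one_div_cpow_half_neg_I_mul_neg_one_div (hτ : 0 < τ.im) :
    1 / (-I * (-1 / τ)) ^ (1 / 2 : ℂ) = (τ / I) ^ ((1 : ℂ) / 2) := by
  have hτ0 : τ ≠ 0 := fun h => by simp [h] at hτ
  have harg : (τ / I).arg ≠ π := by
    rw [Ne, arg_eq_pi_iff]
    simp only [div_I, neg_re, neg_im, mul_re, mul_im, I_re, I_im]
    intro h
    linarith [h.1]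
  rw [show -I * (-1 / τ) = (τ / I)⁻¹ by field_simp, inv_cpow _ _ harg, one_div, inv_inv]

lemma jTheta₂'_neg_one_div (hτ : 0 < τ.im) (v : ℂ) :
    jTheta₂' v (-1 / τ) = (τ / I) ^ ((1 : ℂ) / 2) * cexp (π * I * τ * v ^ 2) *
      (2 * π * I * τ * v * jTheta₁ (τ * v) τ + τ * jTheta₁' (τ * v) τ) := by
  have hτ0 : τ ≠ 0 := fun h => by simp [h] at hτ
  rw [jTheta₂'_eq_jacobiTheta₂' (im_neg_one_div_pos hτ), jacobiTheta₂'_functional_equation,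
    one_div_cpow_half_neg_I_mul_neg_one_div hτ, show -1 / (-1 / τ) = τ by field_simp,
    show (v + 1 / 2) / (-1 / τ) = -(τ * v + τ / 2) by field_simp, jacobiTheta₂'_neg_left,
    jacobiTheta₂_neg_left, jTheta₁_eq_jacobiTheta₂ hτ, jTheta₁'_eq_jacobiTheta₂' hτ,
    show -π * I * (v + 1 / 2) ^ 2 / (-1 / τ)
      = π * I * τ * v ^ 2 + (π * I * τ / 4 + π * I * (τ * v)) by field_simp; ring,
    Complex.exp_add]
  field_simp
  ring

end Theta

theorem stmt7 (v τ : ℂ) (hτ : 0 < τ.im) :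
    jTheta₂' v (τ + 1) = jTheta₃' v τ ∧
    jTheta₂' v (-1 / τ) =
      (τ / Complex.I) ^ ((1 : ℂ) / 2) *
        Complex.exp ((π : ℂ) * Complex.I * τ * v ^ 2) *
        (2 * (π : ℂ) * Complex.I * τ * v * jTheta₁ (τ * v) τ + τ * jTheta₁' (τ * v) τ) :=
  ⟨by simp only [jTheta₂', jTheta₃', jTheta₂_add_one], jTheta₂'_neg_one_div hτ v⟩
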